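/- Let η < 1/2, ε > 0, δ > 0, and let H be a finite hypothesis class containing the target c. Suppose m ≥ (2/(ε²(1−2η)²))·ln(2|H|/δ) examples are drawn i.i.d. and labeled by an η-classification-noise oracle. Then with probability at least 1−δ, every hypothesis h ∈ H with true error d(h,c) ≥ ε has empirical disagreement rate with the noisy sample strictly greater than that of c; hence any minimizer of empirical disagreements has true error less than ε. -/

import Mathlib

open MeasureTheory ProbabilityTheory
open scoped ENNReal

open Real in
private lemma bern_hoeffding' {p : ℝ} (hp0 : 0 ≤ p) (hp1 : p ≤ 1) (s : ℝ) :
    (1 - p) + p * exp s ≤ exp (p * s + s ^ 2 / 8) := by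
  rcases eq_or_lt_of_le hp0 with h0 | hp0'
  · simp only [← h0, sub_zero, zero_mul, add_zero, zero_add]
    have : (0:ℝ) ≤ s ^ 2 / 8 := by positivity
    simpa using Real.one_le_exp this
  set g : ℝ → ℝ := fun s => 1 - p + p * exp s with hg
  have hgpos : ∀ x, 0 < g x := fun x => by
    have : 0 < p * exp x := by positivity
    simp only [hg]; linarith [sub_nonneg.mpr hp1]
  have hgd : ∀ x, HasDerivAt g (p * exp x) x := fun x => by
    exact ((Real.hasDerivAt_exp x).const_mul p).const_add (1 - p)
  set φ : ℝ → ℝ := fun x => p + x / 4 - p * exp x / g x with hφ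
  set f : ℝ → ℝ := fun x => p * x + x ^ 2 / 8 - Real.log (g x) with hf
  have hfd : ∀ x, HasDerivAt f (φ x) x := by
    intro x
    have h1 : HasDerivAt (fun x : ℝ => p * x + x ^ 2 / 8) (p + x / 4) x := by
      have h2 : HasDerivAt (fun x : ℝ => x ^ 2 / 8) (x / 4) x := by
        have := (hasDerivAt_pow 2 x).div_const 8
        exact this.congr_deriv (by norm_num; ring)
      exact ((hasDerivAt_id x).const_mul p).add h2 |>.congr_deriv (by simp)
    have h3 : HasDerivAt (fun x => Real.log (g x)) (p * exp x / g x) x :=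
      (hgd x).log (hgpos x).ne'
    exact h1.sub h3
  have hφd : ∀ x, HasDerivAt φ (1/4 - (p * exp x * g x - p * exp x * (p * exp x)) / g x ^ 2) x := by
    intro x
    have h4 : HasDerivAt (fun x => p * exp x / g x)
        ((p * exp x * g x - p * exp x * (p * exp x)) / g x ^ 2) x :=
      ((Real.hasDerivAt_exp x).const_mul p).div (hgd x) (hgpos x).ne'
    have h5 : HasDerivAt (fun x : ℝ => p + x / 4) (1/4) x := by
      simpa using ((hasDerivAt_id x).div_const 4).const_add p
    exact h5.sub h4
  have hφmono : Monotone φ := by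
    apply monotone_of_deriv_nonneg (fun x => (hφd x).differentiableAt)
    intro x
    rw [(hφd x).deriv]
    have hgx := hgpos x
    have key : (p * exp x * g x - p * exp x * (p * exp x)) / g x ^ 2 ≤ 1/4 := by
      rw [div_le_iff₀ (by positivity)]
      have hgb : g x = 1 - p + p * exp x := rfl
      nlinarith [sq_nonneg (1 - p - p * exp x), Real.exp_pos x]
    linarith
  have hφ0 : φ 0 = 0 := by simp [hφ, hg]
  have hf0 : f 0 = 0 := by simp [hf, hg]
  have hfnonneg : ∀ x, 0 ≤ f x := by
    intro x
    rcases le_or_gt 0 x with hx | hx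
    · have hmono : MonotoneOn f (Set.Ici 0) := by
        apply monotoneOn_of_deriv_nonneg (convex_Ici 0)
        · exact fun y _ => (hfd y).continuousAt.continuousWithinAt
        · exact fun y _ => (hfd y).differentiableAt.differentiableWithinAt
        · intro y hy
          rw [(hfd y).deriv, ← hφ0]
          exact hφmono (le_of_lt (by simpa using hy))
      have := hmono (Set.self_mem_Ici) (Set.mem_Ici.mpr hx) hx
      rwa [hf0] at this
    · have hmono : AntitoneOn f (Set.Iic 0) := by
        apply antitoneOn_of_deriv_nonpos (convex_Iic 0)
        · exact fun y _ => (hfd y).continuousAt.continuousWithinAt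
        · exact fun y _ => (hfd y).differentiableAt.differentiableWithinAt
        · intro y hy
          rw [(hfd y).deriv]
          have hy0 : y ≤ 0 := le_of_lt (by simpa using hy)
          exact le_trans (hφmono hy0) (le_of_eq hφ0)
      have := hmono (Set.mem_Iic.mpr hx.le) (Set.self_mem_Iic) hx.le
      rwa [hf0] at this
  have hx := hfnonneg s
  have hlog : Real.log (g s) ≤ p * s + s ^ 2 / 8 := by simp only [hf] at hx; linarith
  calc (1 - p) + p * exp s = g s := rfl
    _ = exp (Real.log (g s)) := (Real.exp_log (hgpos s)).symm
    _ ≤ exp (p * s + s ^ 2/8) := Real.exp_le_exp.mpr hlog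

section aux
open Real
variable {β : Type*} [MeasurableSpace β] (ν : Measure β) [IsProbabilityMeasure ν]
  {A : Set β} (m : ℕ)

private lemma ind_mgf_int' (hA : MeasurableSet A) (t : ℝ) :
    Integrable (fun ω : Fin m → β => exp (t * ∑ j, A.indicator (fun _ => (1:ℝ)) (ω j)))
      (Measure.pi fun _ : Fin m => ν) := by
  have hXm : Measurable (fun ω : Fin m → β => ∑ j, A.indicator (fun _ => (1:ℝ)) (ω j)) :=
    Finset.measurable_sum _ fun j _ =>
      (measurable_const.indicator hA).comp (measurable_pi_apply j)
  have hmeas : Measurable (fun ω : Fin m → β => exp (t * ∑ j, A.indicator (fun _ => (1:ℝ)) (ω j))) :=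
    Real.measurable_exp.comp (measurable_const.mul hXm)
  haveI : IsProbabilityMeasure (Measure.pi fun _ : Fin m => ν) := by infer_instance
  refine (integrable_const (exp (|t| * m))).mono' hmeas.aestronglyMeasurable ?_
  filter_upwards with ω
  rw [Real.norm_eq_abs, abs_exp]
  apply exp_le_exp.mpr
  have h1 : ∑ j, A.indicator (fun _ => (1:ℝ)) (ω j) ≤ m := by
    calc ∑ j, A.indicator (fun _ => (1:ℝ)) (ω j)
        ≤ ∑ _j : Fin m, 1 :=
          Finset.sum_le_sum fun j _ => Set.indicator_le_self' (fun _ _ => zero_le_one) _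
      _ = m := by simp
  have h0 : 0 ≤ ∑ j, A.indicator (fun _ => (1:ℝ)) (ω j) :=
    Finset.sum_nonneg fun j _ => Set.indicator_nonneg (fun _ _ => zero_le_one) _
  calc t * ∑ j, A.indicator (fun _ => (1:ℝ)) (ω j)
      ≤ |t| * ∑ j, A.indicator (fun _ => (1:ℝ)) (ω j) :=
        mul_le_mul_of_nonneg_right (le_abs_self t) h0
    _ ≤ |t| * m := mul_le_mul_of_nonneg_left h1 (abs_nonneg t)

private lemma ind_mgf_eq' (hA : MeasurableSet A) (t : ℝ) :
    mgf (fun ω : Fin m → β => ∑ j, A.indicator (fun _ => (1:ℝ)) (ω j))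
      (Measure.pi fun _ : Fin m => ν) t
      = (1 - (ν A).toReal + (ν A).toReal * exp t) ^ m := by
  letI : MeasureSpace β := ⟨ν⟩
  have hvol : (Measure.pi fun _ : Fin m => ν) = (volume : Measure (Fin m → β)) :=
    (MeasureTheory.volume_pi).symm
  rw [mgf, hvol]
  have hsplit : ∀ ω : Fin m → β,
      exp (t * ∑ j, A.indicator (fun _ => (1:ℝ)) (ω j))
        = ∏ j : Fin m, (fun x => exp (t * A.indicator (fun _ => (1:ℝ)) x)) (ω j) := by
    intro ω
    rw [Finset.mul_sum, Real.exp_sum]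
  simp_rw [hsplit]
  rw [← hvol, MeasureTheory.integral_fintype_prod_eq_pow (ι := Fin m) (μ := ν)
    (f := fun x => exp (t * A.indicator (fun _ => (1:ℝ)) x)), Fintype.card_fin]
  congr 1
  have heq : ∀ x : β, exp (t * A.indicator (fun _ => (1:ℝ)) x)
      = A.indicator (fun _ => exp t - 1) x + 1 := by
    intro x
    by_cases hx : x ∈ A <;> simp [hx]
  simp_rw [heq]
  rw [integral_add ((integrable_const (exp t - 1)).indicator hA) (integrable_const 1)]
  rw [integral_indicator_const _ hA]
  have hPA : (volume : Measure β) A = ν A := rfl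
  simp only [hPA, smul_eq_mul, measureReal_def, integral_const, measure_univ, ENNReal.toReal_one, one_smul]
  ring

private lemma prob_toReal_le_one' : (ν A).toReal ≤ 1 := by
  have h := prob_le_one (μ := ν) (s := A)
  calc (ν A).toReal ≤ (1 : ENNReal).toReal := ENNReal.toReal_mono ENNReal.one_ne_top h
    _ = 1 := by simp

private lemma base_nonneg' (t : ℝ) : 0 ≤ 1 - (ν A).toReal + (ν A).toReal * exp t := by
  have h1 := prob_toReal_le_one' ν (A := A)
  have h2 : (0:ℝ) ≤ (ν A).toReal * exp t := by positivity
  linarith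

private lemma ind_tail_ge' (hA : MeasurableSet A) (r s : ℝ) (hs : 0 ≤ s) :
    (Measure.pi fun _ : Fin m => ν) {ω | r ≤ ∑ j, A.indicator (fun _ => (1:ℝ)) (ω j)} ≤
      ENNReal.ofReal (exp (-s * r) * exp ((ν A).toReal * s + s ^ 2 / 8) ^ m) := by
  haveI : IsProbabilityMeasure (Measure.pi fun _ : Fin m => ν) := by infer_instance
  have h : ((Measure.pi fun _ : Fin m => ν) {ω | r ≤ ∑ j, A.indicator (fun _ => (1:ℝ)) (ω j)}).toReal
      ≤ exp (-s * r) * mgf (fun ω : Fin m → β => ∑ j, A.indicator (fun _ => (1:ℝ)) (ω j))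
          (Measure.pi fun _ : Fin m => ν) s :=
    measure_ge_le_exp_mul_mgf r hs (ind_mgf_int' ν m hA s)
  rw [ind_mgf_eq' ν m hA s] at h
  refine (ENNReal.le_ofReal_iff_toReal_le (measure_ne_top _ _) (by positivity)).mpr ?_
  refine h.trans ?_
  exact mul_le_mul_of_nonneg_left
    (pow_le_pow_left₀ (base_nonneg' ν s)
      (bern_hoeffding' ENNReal.toReal_nonneg (prob_toReal_le_one' ν) s) m) (exp_pos _).le

private lemma ind_tail_le' (hA : MeasurableSet A) (r s : ℝ) (hs : 0 ≤ s) :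
    (Measure.pi fun _ : Fin m => ν) {ω | ∑ j, A.indicator (fun _ => (1:ℝ)) (ω j) ≤ r} ≤
      ENNReal.ofReal (exp (s * r) * exp (-((ν A).toReal * s) + s ^ 2 / 8) ^ m) := by
  haveI : IsProbabilityMeasure (Measure.pi fun _ : Fin m => ν) := by infer_instance
  have h : ((Measure.pi fun _ : Fin m => ν) {ω | ∑ j, A.indicator (fun _ => (1:ℝ)) (ω j) ≤ r}).toReal
      ≤ exp (-(-s) * r) * mgf (fun ω : Fin m → β => ∑ j, A.indicator (fun _ => (1:ℝ)) (ω j))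
          (Measure.pi fun _ : Fin m => ν) (-s) :=
    measure_le_le_exp_mul_mgf r (neg_nonpos.mpr hs) (ind_mgf_int' ν m hA (-s))
  rw [ind_mgf_eq' ν m hA (-s), neg_neg] at h
  refine (ENNReal.le_ofReal_iff_toReal_le (measure_ne_top _ _) (by positivity)).mpr ?_
  refine h.trans ?_
  have hbb := bern_hoeffding' (p := (ν A).toReal) ENNReal.toReal_nonneg (prob_toReal_le_one' ν) (-s)
  rw [neg_sq] at hbb
  refine mul_le_mul_of_nonneg_left (pow_le_pow_left₀ (base_nonneg' ν (-s)) ?_ m) (exp_pos _).le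
  calc 1 - (ν A).toReal + (ν A).toReal * exp (-s) ≤ exp ((ν A).toReal * (-s) + s ^ 2 / 8) := hbb
    _ = exp (-((ν A).toReal * s) + s ^ 2 / 8) := by ring_nf

end aux

private lemma count_mul' (n : ℕ) (δ : ℝ) (hn : 1 ≤ n) :
    ((2 * n : ℕ) : ℝ≥0∞) * ENNReal.ofReal (δ / (2 * (n:ℝ))) = ENNReal.ofReal δ := by
  have hn0 : (0:ℝ) < (n:ℝ) := by exact_mod_cast hn
  rw [← ENNReal.ofReal_natCast (2 * n),
    ← ENNReal.ofReal_mul (by positivity : (0:ℝ) ≤ ((2 * n : ℕ) : ℝ))]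
  congr 1
  push_cast
  field_simp

/-- Noisy empirical risk minimization over a finite class: with
`m ≥ (2/(ε²(1-2η)²)) · ln (2|H|/δ)` i.i.d. examples drawn from `D` and labeled by an
`η`-classification-noise oracle (a sample is a pair `(x, b)` with `x ~ D` and an
independent Bernoulli(`η`) flip `b`, the observed label being `xor (c x) b`), with
probability at least `1 - δ` every `h ∈ H` with true error at least `ε` has strictly
more empirical disagreements with the noisy labels than the target `c`; hence every
empirical-disagreement minimizer in `H` has true error less than `ε`. -/
theorem stmt_10 {α : Type*} [MeasurableSpace α] (D : Measure α) [IsProbabilityMeasure D]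
    (c : α → Bool) (hc : Measurable c)
    (H : Finset (α → Bool)) (hHmeas : ∀ h ∈ H, Measurable h) (hcH : c ∈ H)
    (η ε δ : ℝ) (hη0 : 0 ≤ η) (hη : η < 1/2) (hε : 0 < ε) (hδ0 : 0 < δ) (hδ1 : δ < 1)
    (hb : ENNReal.ofReal η ≤ 1)
    (m : ℕ)
    (hm : 2 / (ε ^ 2 * (1 - 2 * η) ^ 2) * Real.log (2 * H.card / δ) ≤ m) :
    ENNReal.ofReal (1 - δ) ≤
      (Measure.pi fun _ : Fin m => D.prod ((PMF.bernoulli (Real.toNNReal η) (ENNReal.coe_le_one_iff.mp hb)).toMeasure))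
        {ω : Fin m → α × Bool |
          (∀ h ∈ H, ENNReal.ofReal ε ≤ D {x | h x ≠ c x} →
            (Finset.univ.filter fun j => c (ω j).1 ≠ xor (c (ω j).1) (ω j).2).card <
            (Finset.univ.filter fun j => h (ω j).1 ≠ xor (c (ω j).1) (ω j).2).card) ∧
          (∀ h ∈ H,
            (∀ g ∈ H,
              (Finset.univ.filter fun j => h (ω j).1 ≠ xor (c (ω j).1) (ω j).2).card ≤
              (Finset.univ.filter fun j => g (ω j).1 ≠ xor (c (ω j).1) (ω j).2).card) →
            D {x | h x ≠ c x} < ENNReal.ofReal ε)} := by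
  classical
  set bern := (PMF.bernoulli (Real.toNNReal η) (ENNReal.coe_le_one_iff.mp hb)).toMeasure with hbern
  haveI : IsProbabilityMeasure bern := PMF.toMeasure.isProbabilityMeasure _
  set ν : Measure (α × Bool) := D.prod bern with hν
  haveI : IsProbabilityMeasure ν := by rw [hν]; infer_instance
  set μ : Measure (Fin m → α × Bool) := Measure.pi fun _ : Fin m => ν with hμ
  haveI : IsProbabilityMeasure μ := by rw [hμ]; infer_instance
  -- sets
  set B : (α → Bool) → Set α := fun h => {x | h x ≠ c x} with hB
  set A : (α → Bool) → Set (α × Bool) := fun h => {y | h y.1 ≠ xor (c y.1) y.2} with hA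
  have hBmeas : ∀ h ∈ H, MeasurableSet (B h) := by
    intro h hh
    have : B h = (fun x => (h x, c x)) ⁻¹' {p : Bool × Bool | p.1 ≠ p.2} := rfl
    rw [this]
    exact ((hHmeas h hh).prodMk hc) (Set.toFinite _).measurableSet
  have hAeq : ∀ h : α → Bool, A h = (B h ×ˢ {false}) ∪ ((B h)ᶜ ×ˢ {true}) := by
    intro h
    ext ⟨x, b⟩
    cases b <;> cases hx : h x <;> cases hcx : c x <;>
      simp [hA, hB, hx, hcx]
  have hAmeas : ∀ h ∈ H, MeasurableSet (A h) := by
    intro h hh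
    rw [hAeq h]
    exact ((hBmeas h hh).prod (measurableSet_singleton _)).union
      (((hBmeas h hh).compl).prod (measurableSet_singleton _))
  -- bernoulli values
  have hbt : bern {true} = ENNReal.ofReal η := by
    rw [hbern, PMF.toMeasure_apply_singleton _ _ (measurableSet_singleton _),
      PMF.bernoulli_apply]; rfl
  have hbf : bern {false} = 1 - ENNReal.ofReal η := by
    rw [hbern, PMF.toMeasure_apply_singleton _ _ (measurableSet_singleton _),
      PMF.bernoulli_apply]
    simp only [cond_false]; rw [ENNReal.coe_sub, ENNReal.coe_one]; rfl
  -- measure of A h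
  have hνA : ∀ h ∈ H, (ν (A h)).toReal
      = (D (B h)).toReal * (1 - η) + (1 - (D (B h)).toReal) * η := by
    intro h hh
    have hdisj : Disjoint (B h ×ˢ ({false} : Set Bool)) ((B h)ᶜ ×ˢ ({true} : Set Bool)) := by
      apply Set.disjoint_left.mpr
      rintro ⟨x, b⟩ ⟨_, hb1⟩ ⟨_, hb2⟩
      simp_all
    have : ν (A h) = D (B h) * bern {false} + D ((B h)ᶜ) * bern {true} := by
      rw [hAeq h, measure_union hdisj
        ((((hBmeas h hh).compl).prod (measurableSet_singleton _))),
        hν, Measure.prod_prod, Measure.prod_prod]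
    rw [this, hbt, hbf, measure_compl (hBmeas h hh) (measure_ne_top _ _), measure_univ]
    rw [ENNReal.toReal_add (by finiteness) (by finiteness), ENNReal.toReal_mul,
      ENNReal.toReal_mul, ENNReal.toReal_sub_of_le hb ENNReal.one_ne_top,
      ENNReal.toReal_sub_of_le (prob_le_one) ENNReal.one_ne_top,
      ENNReal.toReal_ofReal hη0]
    simp
  -- counting = sum of indicators
  have card_eq : ∀ (h : α → Bool) (ω : Fin m → α × Bool),
      ((Finset.univ.filter fun j => h (ω j).1 ≠ xor (c (ω j).1) (ω j).2).card : ℝ)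
        = ∑ j, (A h).indicator (fun _ => (1:ℝ)) (ω j) := by
    intro h ω
    rw [Finset.card_filter]
    push_cast
    refine Finset.sum_congr rfl fun j _ => ?_
    by_cases hj : h (ω j).1 ≠ xor (c (ω j).1) (ω j).2
    · rw [if_pos hj, Set.indicator_of_mem (by exact hj)]
    · rw [if_neg hj, Set.indicator_of_notMem (by exact hj)]
  -- numerics
  set t : ℝ := ε * (1 - 2 * η) / 2 with ht
  have h2η : 0 < 1 - 2 * η := by linarith
  have ht0 : 0 < t := by rw [ht]; positivity
  set θ : ℝ := η + t with hθ
  set K : ℝ := (H.card : ℝ) with hK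
  have hK1 : (1:ℝ) ≤ K := by
    rw [hK]
    exact_mod_cast Finset.card_pos.mpr ⟨c, hcH⟩
  have hKpos : (0:ℝ) < 2 * K / δ := by positivity
  -- the exponential bound
  have hexp : Real.exp (-(2 * m * t ^ 2)) ≤ δ / (2 * K) := by
    have hlog : Real.log (2 * K / δ) ≤ 2 * m * t ^ 2 := by
      have ht2 : t ^ 2 = ε ^ 2 * (1 - 2*η) ^ 2 / 4 := by rw [ht]; ring
      have hd : 0 < ε ^ 2 * (1 - 2*η) ^ 2 := by positivity
      rw [ht2]
      calc Real.log (2 * K / δ)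
          = (2 / (ε ^ 2 * (1 - 2*η) ^ 2) * Real.log (2 * K / δ))
            * (ε ^ 2 * (1 - 2*η) ^ 2 / 2) := by
            field_simp
          _ ≤ m * (ε ^ 2 * (1 - 2*η) ^ 2 / 2) := by
            apply mul_le_mul_of_nonneg_right _ (by positivity)
            exact hm
          _ = 2 * m * (ε ^ 2 * (1 - 2*η) ^ 2 / 4) := by ring
    calc Real.exp (-(2 * m * t ^ 2)) ≤ Real.exp (-(Real.log (2 * K / δ))) :=
          Real.exp_le_exp.mpr (by linarith)
      _ = (2 * K / δ)⁻¹ := by rw [Real.exp_neg, Real.exp_log hKpos]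
      _ = δ / (2 * K) := by field_simp
  -- bad events
  set S : (α → Bool) → (Fin m → α × Bool) → ℝ :=
    fun h ω => ∑ j, (A h).indicator (fun _ => (1:ℝ)) (ω j) with hS
  set E0 : Set (Fin m → α × Bool) := {ω | θ * m ≤ S c ω} with hE0
  set Eh : (α → Bool) → Set (Fin m → α × Bool) := fun h => {ω | S h ω ≤ θ * m} with hEh
  set Bad : Finset (α → Bool) := H.filter (fun h => ENNReal.ofReal ε ≤ D (B h)) with hBad
  -- tail bound for c
  have hpc : (ν (A c)).toReal = η := by
    have hBc : B c = ∅ := by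
      ext x; simp [hB]
    rw [hνA c hcH, hBc]
    simp
  have tail0 : μ E0 ≤ ENNReal.ofReal (δ / (2 * K)) := by
    have h1 := ind_tail_ge' ν m (hAmeas c hcH) (θ * m) (4 * t) (by positivity)
    rw [hpc] at h1
    refine le_trans h1 ?_
    apply ENNReal.ofReal_le_ofReal
    rw [← Real.exp_nat_mul, ← Real.exp_add]
    refine le_trans (Real.exp_le_exp.mpr ?_) hexp
    have : -(4 * t) * (θ * m) + m * (η * (4 * t) + (4 * t) ^ 2 / 8)
        = -(2 * m * t ^ 2) := by rw [hθ]; ring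
    rw [this]
  -- tail bound for bad h
  have tailh : ∀ h ∈ Bad, μ (Eh h) ≤ ENNReal.ofReal (δ / (2 * K)) := by
    intro h hh
    rw [hBad, Finset.mem_filter] at hh
    obtain ⟨hhH, hhbad⟩ := hh
    have hd : ε ≤ (D (B h)).toReal := by
      have := ENNReal.toReal_mono (measure_ne_top _ _) hhbad
      rwa [ENNReal.toReal_ofReal hε.le] at this
    have hd1 : (D (B h)).toReal ≤ 1 := prob_toReal_le_one' D
    have hph : η + 2 * t ≤ (ν (A h)).toReal := by
      rw [hνA h hhH, ht]
      nlinarith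
    have h1 := ind_tail_le' ν m (hAmeas h hhH) (θ * m) (4 * t) (by positivity)
    refine le_trans h1 ?_
    apply ENNReal.ofReal_le_ofReal
    rw [← Real.exp_nat_mul, ← Real.exp_add]
    refine le_trans (Real.exp_le_exp.mpr ?_) hexp
    have hm0 : (0:ℝ) ≤ m := Nat.cast_nonneg m
    have : 4 * t * (θ * m) + m * (-((η + 2*t) * (4 * t)) + (4 * t) ^ 2 / 8)
        = -(2 * m * t ^ 2) := by rw [hθ]; ring
    calc 4 * t * (θ * m) + m * (-((ν (A h)).toReal * (4 * t)) + (4 * t) ^ 2 / 8)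
        ≤ 4 * t * (θ * m) + m * (-((η + 2*t) * (4 * t)) + (4 * t) ^ 2 / 8) := by
          have : (η + 2*t) * (4 * t) ≤ (ν (A h)).toReal * (4 * t) :=
            mul_le_mul_of_nonneg_right hph (by positivity)
          nlinarith
      _ = -(2 * m * t ^ 2) := this
  -- good event
  set G : Set (Fin m → α × Bool) := E0ᶜ ∩ ⋂ h ∈ Bad, (Eh h)ᶜ with hG
  -- G is contained in the target event
  have hGsub : G ⊆ {ω : Fin m → α × Bool |
      (∀ h ∈ H, ENNReal.ofReal ε ≤ D {x | h x ≠ c x} →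
        (Finset.univ.filter fun j => c (ω j).1 ≠ xor (c (ω j).1) (ω j).2).card <
        (Finset.univ.filter fun j => h (ω j).1 ≠ xor (c (ω j).1) (ω j).2).card) ∧
      (∀ h ∈ H,
        (∀ g ∈ H,
          (Finset.univ.filter fun j => h (ω j).1 ≠ xor (c (ω j).1) (ω j).2).card ≤
          (Finset.univ.filter fun j => g (ω j).1 ≠ xor (c (ω j).1) (ω j).2).card) →
        D {x | h x ≠ c x} < ENNReal.ofReal ε)} := by
    intro ω hω
    obtain ⟨hω0, hωh⟩ := hω
    have hc_small : S c ω < θ * m := lt_of_not_ge (by exact hω0)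
    have key : ∀ h ∈ H, ENNReal.ofReal ε ≤ D (B h) →
        (Finset.univ.filter fun j => c (ω j).1 ≠ xor (c (ω j).1) (ω j).2).card <
        (Finset.univ.filter fun j => h (ω j).1 ≠ xor (c (ω j).1) (ω j).2).card := by
      intro h hhH hhbad
      have hmem : h ∈ Bad := by rw [hBad, Finset.mem_filter]; exact ⟨hhH, hhbad⟩
      have : ω ∈ (Eh h)ᶜ := by
        have := Set.mem_iInter₂.mp hωh h hmem
        exact this
      have hh_big : θ * m < S h ω := lt_of_not_ge (by exact this)
      have : ((Finset.univ.filter fun j => c (ω j).1 ≠ xor (c (ω j).1) (ω j).2).card : ℝ)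
          < ((Finset.univ.filter fun j => h (ω j).1 ≠ xor (c (ω j).1) (ω j).2).card : ℝ) := by
        rw [card_eq c ω, card_eq h ω]
        exact lt_trans hc_small hh_big
      exact_mod_cast this
    refine ⟨key, ?_⟩
    intro h hhH hmin
    by_contra hcon
    have hhbad : ENNReal.ofReal ε ≤ D (B h) := not_lt.mp hcon
    have h1 := key h hhH hhbad
    have h2 := hmin c hcH
    omega
  -- measure of the complement of G
  have hGc : μ Gᶜ ≤ ENNReal.ofReal δ := by
    have hsub : Gᶜ ⊆ E0 ∪ ⋃ h ∈ Bad, Eh h := by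
      intro ω hω
      rw [hG, Set.compl_inter, Set.compl_iInter₂] at hω
      rcases hω with hω | hω
      · exact Or.inl (by simpa using hω)
      · right
        simp only [Set.mem_iUnion, compl_compl] at hω ⊢
        exact hω
    calc μ Gᶜ ≤ μ (E0 ∪ ⋃ h ∈ Bad, Eh h) := measure_mono hsub
      _ ≤ μ E0 + μ (⋃ h ∈ Bad, Eh h) := measure_union_le _ _
      _ ≤ ENNReal.ofReal (δ / (2 * K)) + ∑ h ∈ Bad, μ (Eh h) :=
          add_le_add tail0 (measure_biUnion_finset_le _ _)
      _ ≤ ENNReal.ofReal (δ / (2 * K)) + ∑ _h ∈ Bad, ENNReal.ofReal (δ / (2 * K)) := by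
          gcongr with h hh
          exact tailh h hh
      _ = (1 + Bad.card) * ENNReal.ofReal (δ / (2 * K)) := by
          rw [Finset.sum_const, nsmul_eq_mul]; ring
      _ ≤ (2 * H.card : ℕ) * ENNReal.ofReal (δ / (2 * K)) := by
          refine mul_le_mul_left ?_ _
          have hBc : Bad.card ≤ H.card := Finset.card_le_card (Finset.filter_subset _ _)
          have h1 : (1:ℕ) ≤ H.card := Finset.card_pos.mpr ⟨c, hcH⟩
          calc (1:ℝ≥0∞) + Bad.card ≤ H.card + H.card :=
                add_le_add (by exact_mod_cast h1) (by exact_mod_cast hBc)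
            _ = (2 * H.card : ℕ) := by push_cast; ring
      _ = ENNReal.ofReal δ := by
          rw [hK]
          exact count_mul' H.card δ (Finset.card_pos.mpr ⟨c, hcH⟩)
  -- conclude
  have hμG : ENNReal.ofReal (1 - δ) ≤ μ G := by
    have h1 : (1:ℝ≥0∞) ≤ μ G + μ Gᶜ := by
      rw [← measure_univ (μ := μ), ← Set.union_compl_self G]
      exact measure_union_le _ _
    have h2 : (1:ℝ≥0∞) ≤ μ G + ENNReal.ofReal δ := le_trans h1 (by gcongr)
    have h3 : ENNReal.ofReal (1 - δ) = 1 - ENNReal.ofReal δ := by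
      rw [ENNReal.ofReal_sub _ hδ0.le, ENNReal.ofReal_one]
    rw [h3]
    exact tsub_le_iff_right.mpr h2
  exact le_trans hμG (measure_mono hGsub)
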